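/- arXiv:2211.15065 — 9 statements merged into one kernel-verified Lean document; each statement's English description precedes it below -/
import Mathlib

section
/- In the finite tabular setting, let P be a transition matrix, π a policy with activity matrix Aπ, γ a discount factor with 0 ≤ γ < 1, ρ an initial distribution, r : S × A → ℝ a reward vector, and q : S → ℝ a penalty vector. Let v_q be the unique fixed point of v ↦ Aπ(r + γPv) − q and v₀ the unique fixed point of v ↦ Aπ(r + γPv). Then ⟨ρ, v₀⟩ − ⟨ρ, v_q⟩ = ⟨d^π, q⟩, where d^π := ρᵀ(I − γAπP)⁻¹ is the discounted occupancy of π. -/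
open Matrix Finset

/-- The activity matrix `Aπ` of a policy `π`: `Aπ s (s', a) = π s a` if `s' = s`, else `0`. -/
def actMat {S A : Type*} [DecidableEq S] (π : S → A → ℝ) : Matrix S (S × A) ℝ :=
  Matrix.of fun s p => if p.1 = s then π s p.2 else 0

/-- The value vector `V^π = (I − γ Aπ P)⁻¹ (Aπ r)`. -/
noncomputable def valVec {S A : Type*} [Fintype S] [Fintype A] [DecidableEq S]
    (γ : ℝ) (P : Matrix (S × A) S ℝ) (r : S × A → ℝ) (π : S → A → ℝ) : S → ℝ :=
  (1 - γ • (actMat π * P))⁻¹.mulVec ((actMat π).mulVec r)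

/-- The discounted occupancy row vector `d^π = ρᵀ (I − γ Aπ P)⁻¹`. -/
noncomputable def occVec {S A : Type*} [Fintype S] [Fintype A] [DecidableEq S]
    (γ : ℝ) (P : Matrix (S × A) S ℝ) (ρ : S → ℝ) (π : S → A → ℝ) : S → ℝ :=
  Matrix.vecMul ρ (1 - γ • (actMat π * P))⁻¹

/-- The normalized discounted occupancy `(1 − γ)·ρᵀ (I − γ Aπ P)⁻¹`. -/
noncomputable def noccVec {S A : Type*} [Fintype S] [Fintype A] [DecidableEq S]
    (γ : ℝ) (P : Matrix (S × A) S ℝ) (ρ : S → ℝ) (π : S → A → ℝ) : S → ℝ :=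
  fun s => (1 - γ) * Matrix.vecMul ρ (1 - γ • (actMat π * P))⁻¹ s


lemma stoch_isUnit {S : Type*} [Fintype S] [Nonempty S] [DecidableEq S]
    (B : Matrix S S ℝ) (hB0 : ∀ s t, 0 ≤ B s t) (hB1 : ∀ s, ∑ t, B s t = 1)
    (γ : ℝ) (hγ0 : 0 ≤ γ) (hγ1 : γ < 1) : IsUnit (1 - γ • B) := by
  rw [← Matrix.mulVec_injective_iff_isUnit]
  intro x y h
  have hz : (1 - γ • B).mulVec (x - y) = 0 := by
    rw [Matrix.mulVec_sub, h, sub_self]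
  have key : x - y = 0 := by
    by_contra hxy
    obtain ⟨s, hs⟩ := Finset.exists_max_image Finset.univ (fun s => |(x - y) s|)
      ⟨Classical.arbitrary S, Finset.mem_univ _⟩
    set z := x - y with hzdef
    have hzs : z s = γ * (B.mulVec z) s := by
      have := congrFun hz s
      simp [Matrix.sub_mulVec, Matrix.smul_mulVec, Matrix.one_mulVec,
        sub_eq_zero, Pi.smul_apply, smul_eq_mul] at this
      exact this
    have hpos : 0 < |z s| := by
      rcases Function.ne_iff.1 hxy with ⟨t, ht⟩
      have : 0 < |z t| := abs_pos.2 ht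
      linarith [hs.2 t (Finset.mem_univ t)]
    have hbound : |z s| ≤ γ * |z s| := by
      calc |z s| = γ * |(B.mulVec z) s| := by rw [hzs, abs_mul, abs_of_nonneg hγ0]
      _ ≤ γ * |z s| := by
          apply mul_le_mul_of_nonneg_left _ hγ0
          calc |(B.mulVec z) s| ≤ ∑ t, |B s t * z t| := Finset.abs_sum_le_sum_abs _ _
          _ ≤ ∑ t, B s t * |z s| := by
              apply Finset.sum_le_sum
              intro t _
              rw [abs_mul, abs_of_nonneg (hB0 s t)]
              exact mul_le_mul_of_nonneg_left (hs.2 t (Finset.mem_univ t)) (hB0 s t)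
          _ = |z s| := by rw [← Finset.sum_mul, hB1, one_mul]
    nlinarith
  exact sub_eq_zero.1 key

/-- If `v_q` is the fixed point of the penalized Bellman operator
`v ↦ Aπ(r + γ P v) − q` and `v₀` the fixed point of the unpenalized one, then
`⟨ρ, v₀⟩ − ⟨ρ, v_q⟩ = ⟨d^π, q⟩` with `d^π = ρᵀ(I − γ Aπ P)⁻¹`. -/
theorem penalty_value_gap {S A : Type*} [Fintype S] [Fintype A]
    [Nonempty S] [Nonempty A] [DecidableEq S]
    (P : Matrix (S × A) S ℝ) (hP0 : ∀ p s, 0 ≤ P p s) (hP1 : ∀ p, ∑ s, P p s = 1)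
    (π : S → A → ℝ) (hπ0 : ∀ s a, 0 ≤ π s a) (hπ1 : ∀ s, ∑ a, π s a = 1)
    (γ : ℝ) (hγ0 : 0 ≤ γ) (hγ1 : γ < 1)
    (ρ : S → ℝ) (hρ0 : ∀ s, 0 ≤ ρ s) (hρ1 : ∑ s, ρ s = 1)
    (r : S × A → ℝ) (q : S → ℝ) (vq v₀ : S → ℝ)
    (hvq : (actMat π).mulVec (r + γ • P.mulVec vq) - q = vq)
    (hv₀ : (actMat π).mulVec (r + γ • P.mulVec v₀) = v₀) :
    ∑ s, ρ s * v₀ s - ∑ s, ρ s * vq s = ∑ s, occVec γ P ρ π s * q s := by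
  set B : Matrix S S ℝ := actMat π * P with hBdef
  have hBval : ∀ s t, B s t = ∑ a, π s a * P (s, a) t := by
    intro s t
    rw [hBdef]
    simp only [Matrix.mul_apply, actMat, Matrix.of_apply, Fintype.sum_prod_type]
    rw [Finset.sum_eq_single s]
    · simp
    · intro b _ hb; simp [hb]
    · simp
  have hB0 : ∀ s t, 0 ≤ B s t := by
    intro s t; rw [hBval]
    exact Finset.sum_nonneg fun a _ => mul_nonneg (hπ0 s a) (hP0 _ t)
  have hB1 : ∀ s, ∑ t, B s t = 1 := by
    intro s
    simp only [hBval]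
    rw [Finset.sum_comm]
    simp [← Finset.mul_sum, hP1, hπ1]
  set M : Matrix S S ℝ := 1 - γ • B with hMdef
  have hM : IsUnit M := stoch_isUnit B hB0 hB1 γ hγ0 hγ1
  have expand : ∀ v : S → ℝ, (actMat π).mulVec (r + γ • P.mulVec v)
      = (actMat π).mulVec r + γ • B.mulVec v := by
    intro v
    rw [Matrix.mulVec_add, Matrix.mulVec_smul, hBdef, ← Matrix.mulVec_mulVec]
  have hkey : M.mulVec (v₀ - vq) = q := by
    rw [expand] at hvq hv₀
    have hM2 : M.mulVec (v₀ - vq) = (v₀ - vq) - γ • B.mulVec (v₀ - vq) := by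
      rw [hMdef, Matrix.sub_mulVec, Matrix.one_mulVec, Matrix.smul_mulVec]
    rw [hM2, Matrix.mulVec_sub, smul_sub]
    funext s
    have h1 := congrFun hvq s
    have h2 := congrFun hv₀ s
    simp only [Pi.sub_apply, Pi.add_apply, Pi.smul_apply, smul_eq_mul] at h1 h2 ⊢
    linarith
  have hdet : IsUnit M.det := (Matrix.isUnit_iff_isUnit_det M).1 hM
  have hsol : v₀ - vq = M⁻¹.mulVec q := by
    rw [← hkey, Matrix.mulVec_mulVec, Matrix.nonsing_inv_mul M hdet, Matrix.one_mulVec]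
  calc ∑ s, ρ s * v₀ s - ∑ s, ρ s * vq s = ρ ⬝ᵥ (v₀ - vq) := by
        rw [← Finset.sum_sub_distrib]
        simp [dotProduct, mul_sub]
  _ = ρ ⬝ᵥ M⁻¹.mulVec q := by rw [hsol]
  _ = Matrix.vecMul ρ M⁻¹ ⬝ᵥ q := Matrix.dotProduct_mulVec ρ M⁻¹ q
  _ = ∑ s, occVec γ P ρ π s * q s := rfl
end

section
/- In the finite tabular setting, let (P, r) and (P_D, r_D) be two transition-matrix/reward pairs, π a policy with activity matrix Aπ, γ a discount factor with 0 ≤ γ < 1, and ρ an initial distribution. Define V^π := (I − γAπP)⁻¹(Aπ r), V_D^π := (I − γAπP_D)⁻¹(Aπ r_D), and d_D^π := ρᵀ(I − γAπP_D)⁻¹. Then V_D^π − V^π = (I − γAπP_D)⁻¹·( Aπ(r_D − r) + γ·Aπ(P_D − P)·V^π ). Consequently, if u : S → ℝ is nonnegative and |(Aπ(r_D − r) + γ·Aπ(P_D − P)·V^π)(s)| ≤ u(s) for every s, then |⟨ρ, V_D^π − V^π⟩| ≤ ⟨d_D^π, u⟩. -/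
open Matrix Finset

section Aux

variable {S : Type*} [Fintype S] [DecidableEq S]

lemma mulVec_entry (Q : Matrix S S ℝ) (x : S → ℝ) (s : S) :
    Q.mulVec x s = ∑ t, Q s t * x t := rfl

lemma sub_smul_mulVec (Q : Matrix S S ℝ) (γ : ℝ) (x : S → ℝ) (s : S) :
    ((1 - γ • Q).mulVec x) s = x s - γ * Q.mulVec x s := by
  rw [Matrix.sub_mulVec, Matrix.one_mulVec, Matrix.smul_mulVec]
  simp [Pi.sub_apply]

lemma stoch_isUnit_s6 [Nonempty S] (Q : Matrix S S ℝ) (hQ0 : ∀ i j, 0 ≤ Q i j)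
    (hQ1 : ∀ i, ∑ j, Q i j = 1) {γ : ℝ} (hγ0 : 0 ≤ γ) (hγ1 : γ < 1) :
    IsUnit (1 - γ • Q) := by
  rw [← Matrix.mulVec_injective_iff_isUnit]
  have key : ∀ x : S → ℝ, (1 - γ • Q).mulVec x = 0 → x = 0 := by
    intro x hx
    obtain ⟨s, -, hs⟩ := Finset.exists_max_image Finset.univ (fun t => |x t|)
      ⟨Classical.arbitrary S, Finset.mem_univ _⟩
    have hxs : ∀ t, x t = γ * Q.mulVec x t := by
      intro t
      have := congrFun hx t
      rw [sub_smul_mulVec] at this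
      simpa [sub_eq_zero] using this
    have hb : |x s| ≤ γ * |x s| := by
      calc |x s| = γ * |Q.mulVec x s| := by rw [hxs s, abs_mul, abs_of_nonneg hγ0]
        _ ≤ γ * ∑ t, Q s t * |x t| := by
            apply mul_le_mul_of_nonneg_left _ hγ0
            rw [mulVec_entry]
            refine (Finset.abs_sum_le_sum_abs _ _).trans (Finset.sum_le_sum ?_)
            intro t _
            rw [abs_mul, abs_of_nonneg (hQ0 s t)]
        _ ≤ γ * ∑ t, Q s t * |x s| := by
            apply mul_le_mul_of_nonneg_left _ hγ0
            exact Finset.sum_le_sum fun t _ =>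
              mul_le_mul_of_nonneg_left (hs t (Finset.mem_univ t)) (hQ0 s t)
        _ = γ * |x s| := by rw [← Finset.sum_mul, hQ1 s, one_mul]
    have hxs0 : |x s| = 0 := by nlinarith [abs_nonneg (x s)]
    funext t
    have := hs t (Finset.mem_univ t)
    rw [hxs0] at this
    simpa using le_antisymm this (abs_nonneg _)
  intro x y hxy
  have : (1 - γ • Q).mulVec (x - y) = 0 := by
    rw [Matrix.mulVec_sub, hxy, sub_self]
  have := key _ this
  funext t
  have := congrFun this t
  simpa [sub_eq_zero] using this

lemma inv_mulVec_nonneg [Nonempty S] (Q : Matrix S S ℝ) (hQ0 : ∀ i j, 0 ≤ Q i j)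
    (hQ1 : ∀ i, ∑ j, Q i j = 1) {γ : ℝ} (hγ0 : 0 ≤ γ) (hγ1 : γ < 1)
    (x : S → ℝ) (hx : ∀ t, 0 ≤ x t) : ∀ t, 0 ≤ (1 - γ • Q)⁻¹.mulVec x t := by
  have hU := stoch_isUnit_s6 Q hQ0 hQ1 hγ0 hγ1
  have hdet : IsUnit (1 - γ • Q).det := (Matrix.isUnit_iff_isUnit_det _).mp hU
  set y := (1 - γ • Q)⁻¹.mulVec x with hy
  have hMy : (1 - γ • Q).mulVec y = x := by
    rw [hy, Matrix.mulVec_mulVec, Matrix.mul_nonsing_inv _ hdet, Matrix.one_mulVec]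
  obtain ⟨s, -, hs⟩ := Finset.exists_min_image Finset.univ y
    ⟨Classical.arbitrary S, Finset.mem_univ _⟩
  have hyt : ∀ t, y t = x t + γ * Q.mulVec y t := by
    intro t
    have := congrFun hMy t
    rw [sub_smul_mulVec] at this
    linarith
  have hQy : γ * y s ≤ γ * Q.mulVec y s := by
    apply mul_le_mul_of_nonneg_left _ hγ0
    calc y s = ∑ t, Q s t * y s := by rw [← Finset.sum_mul, hQ1 s, one_mul]
      _ ≤ ∑ t, Q s t * y t := Finset.sum_le_sum fun t _ =>
          mul_le_mul_of_nonneg_left (hs t (Finset.mem_univ t)) (hQ0 s t)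
      _ = Q.mulVec y s := rfl
  have hys : 0 ≤ y s := by nlinarith [hx s, hyt s]
  intro t
  exact hys.trans (hs t (Finset.mem_univ t))

lemma inv_entry_nonneg [Nonempty S] (Q : Matrix S S ℝ) (hQ0 : ∀ i j, 0 ≤ Q i j)
    (hQ1 : ∀ i, ∑ j, Q i j = 1) {γ : ℝ} (hγ0 : 0 ≤ γ) (hγ1 : γ < 1)
    (i j : S) : 0 ≤ (1 - γ • Q)⁻¹ i j := by
  have := inv_mulVec_nonneg Q hQ0 hQ1 hγ0 hγ1 (Pi.single j 1)
    (fun t => by by_cases h : t = j <;> simp [Pi.single_apply, h]) i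
  rwa [mulVec_entry, Finset.sum_eq_single j
    (fun b _ hb => by simp [Pi.single_apply, hb])
    (fun h => absurd (Finset.mem_univ j) h), Pi.single_eq_same, mul_one] at this

end Aux

/-- simulation lemma / evaluation-error bound. For two models `(P, r)` and
`(P_D, r_D)`, the value difference satisfies
`V_D^π − V^π = (I − γAπP_D)⁻¹ (Aπ(r_D − r) + γ Aπ(P_D − P) V^π)`; consequently, any state-wise
bound `u` on the Bellman residual yields `|⟨ρ, V_D^π − V^π⟩| ≤ ⟨d_D^π, u⟩`. -/
theorem simulation_identity_and_error_bound {S A : Type*} [Fintype S] [Fintype A]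
    [Nonempty S] [Nonempty A] [DecidableEq S]
    (P PD : Matrix (S × A) S ℝ)
    (hP0 : ∀ p s, 0 ≤ P p s) (hP1 : ∀ p, ∑ s, P p s = 1)
    (hPD0 : ∀ p s, 0 ≤ PD p s) (hPD1 : ∀ p, ∑ s, PD p s = 1)
    (π : S → A → ℝ) (hπ0 : ∀ s a, 0 ≤ π s a) (hπ1 : ∀ s, ∑ a, π s a = 1)
    (γ : ℝ) (hγ0 : 0 ≤ γ) (hγ1 : γ < 1)
    (ρ : S → ℝ) (hρ0 : ∀ s, 0 ≤ ρ s) (hρ1 : ∑ s, ρ s = 1)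
    (r rD : S × A → ℝ) :
    (valVec γ PD rD π - valVec γ P r π
      = (1 - γ • (actMat π * PD))⁻¹.mulVec
          ((actMat π).mulVec (rD - r)
            + γ • (actMat π).mulVec ((PD - P).mulVec (valVec γ P r π)))) ∧
    (∀ u : S → ℝ, (∀ s, 0 ≤ u s) →
      (∀ s, |((actMat π).mulVec (rD - r)
          + γ • (actMat π).mulVec ((PD - P).mulVec (valVec γ P r π))) s| ≤ u s) →
      |∑ s, ρ s * (valVec γ PD rD π s - valVec γ P r π s)|
        ≤ ∑ s, occVec γ PD ρ π s * u s) := by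
  set B := actMat π with hB
  -- entry formula for B * X
  have hBmul : ∀ (X : Matrix (S × A) S ℝ) (s t : S),
      (B * X) s t = ∑ a, π s a * X (s, a) t := by
    intro X s t
    rw [Matrix.mul_apply, Fintype.sum_prod_type]
    rw [Finset.sum_eq_single s]
    · simp [hB, actMat]
    · intro b _ hb; simp [hB, actMat, hb]
    · intro h; exact absurd (Finset.mem_univ s) h
  have hQprop : ∀ (X : Matrix (S × A) S ℝ), (∀ p s, 0 ≤ X p s) → (∀ p, ∑ s, X p s = 1) →
      (∀ i j, 0 ≤ (B * X) i j) ∧ (∀ i, ∑ j, (B * X) i j = 1) := by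
    intro X hX0 hX1
    constructor
    · intro i j
      rw [hBmul]
      exact Finset.sum_nonneg fun a _ => mul_nonneg (hπ0 i a) (hX0 _ j)
    · intro i
      simp only [hBmul]
      rw [Finset.sum_comm]
      calc ∑ a, ∑ j, π i a * X (i, a) j = ∑ a, π i a * ∑ j, X (i, a) j := by
            simp [Finset.mul_sum]
        _ = 1 := by simp [hX1, hπ1]
  obtain ⟨hQD0, hQD1⟩ := hQprop PD hPD0 hPD1
  obtain ⟨hQ0, hQ1⟩ := hQprop P hP0 hP1
  have hUD := stoch_isUnit_s6 (B * PD) hQD0 hQD1 hγ0 hγ1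
  have hU := stoch_isUnit_s6 (B * P) hQ0 hQ1 hγ0 hγ1
  have hdetD : IsUnit (1 - γ • (B * PD)).det := (Matrix.isUnit_iff_isUnit_det _).mp hUD
  have hdet : IsUnit (1 - γ • (B * P)).det := (Matrix.isUnit_iff_isUnit_det _).mp hU
  set M := 1 - γ • (B * PD) with hM
  set N := 1 - γ • (B * P) with hN
  set V := valVec γ P r π with hV
  set VD := valVec γ PD rD π with hVD
  set w := B.mulVec (rD - r) + γ • B.mulVec ((PD - P).mulVec V) with hw
  have hNV : N.mulVec V = B.mulVec r := by
    rw [hV, valVec, ← hB, ← hN, Matrix.mulVec_mulVec, Matrix.mul_nonsing_inv _ hdet,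
      Matrix.one_mulVec]
  have hMVD : M.mulVec VD = B.mulVec rD := by
    rw [hVD, valVec, ← hB, ← hM, Matrix.mulVec_mulVec, Matrix.mul_nonsing_inv _ hdetD,
      Matrix.one_mulVec]
  have hMN : M = N - γ • (B * (PD - P)) := by
    rw [hM, hN, Matrix.mul_sub, smul_sub]
    abel
  have hkey : M.mulVec (VD - V) = w := by
    rw [Matrix.mulVec_sub, hMVD]
    have hMV : M.mulVec V = B.mulVec r - γ • B.mulVec ((PD - P).mulVec V) := by
      rw [hMN, Matrix.sub_mulVec, hNV, Matrix.smul_mulVec, Matrix.mulVec_mulVec]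
    rw [hMV, hw, Matrix.mulVec_sub]
    abel
  have hmain : VD - V = M⁻¹.mulVec w := by
    rw [← hkey, Matrix.mulVec_mulVec, Matrix.nonsing_inv_mul _ hdetD, Matrix.one_mulVec]
  refine ⟨hmain, ?_⟩
  intro u hu hwu
  have hd0 : ∀ s, 0 ≤ occVec γ PD ρ π s := by
    intro s
    rw [occVec, ← hB, ← hM]
    refine Finset.sum_nonneg fun i _ => mul_nonneg (hρ0 i) ?_
    exact inv_entry_nonneg (B * PD) hQD0 hQD1 hγ0 hγ1 i s
  have hdot : ∑ s, ρ s * (VD s - V s) = ∑ s, occVec γ PD ρ π s * w s := by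
    have : ∑ s, ρ s * (VD s - V s) = ρ ⬝ᵥ (M⁻¹.mulVec w) := by
      rw [← hmain]; rfl
    rw [this, Matrix.dotProduct_mulVec]
    rfl
  rw [hdot]
  calc |∑ s, occVec γ PD ρ π s * w s| ≤ ∑ s, |occVec γ PD ρ π s * w s| :=
        Finset.abs_sum_le_sum_abs _ _
    _ = ∑ s, occVec γ PD ρ π s * |w s| := by
        refine Finset.sum_congr rfl fun s _ => ?_
        rw [abs_mul, abs_of_nonneg (hd0 s)]
    _ ≤ ∑ s, occVec γ PD ρ π s * u s :=
        Finset.sum_le_sum fun s _ => mul_le_mul_of_nonneg_left (hwu s) (hd0 s)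
end

section
/- (Deterministic core of Lemma 1.) In the finite tabular setting, let (P, r) be the true model and (P_D, r_D) an empirical model, with V^π := (I − γAπP)⁻¹(Aπ r), V_D^π := (I − γAπP_D)⁻¹(Aπ r_D) and d_D^π := ρᵀ(I − γAπP_D)⁻¹ for each policy π. Let Π be a finite nonempty set of policies, π* any policy, α > 0, and for each π ∈ Π let p^π : S → ℝ be a penalty vector and u^π : S → ℝ a nonnegative vector such that |⟨ρ, V_D^π − V^π⟩| ≤ ⟨d_D^π, u^π⟩. Let π̂ ∈ Π be any maximizer over Π of π ↦ ⟨ρ, V_D^π⟩ − ⟨d_D^π, α·p^π⟩ (the proximal pessimistic policy optimization output). Then ⟨ρ, V^{π*} − V^{π̂}⟩ ≤ min_{π∈Π} ( ⟨ρ, V^{π*} − V^π⟩ + ⟨d_D^π, u^π + α·p^π⟩ ) + max_{π∈Π} ⟨d_D^π, u^π − α·p^π⟩. -/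
open Matrix Finset

/-- deterministic core of Lemma 1. If each policy's empirical value
estimate is accurate up to `⟨d_D^π, u^π⟩` and `π̂ ∈ Π` maximizes the proximal pessimistic
objective `⟨ρ, V_D^π⟩ − ⟨d_D^π, α·p^π⟩`, then the suboptimality of `π̂` against any comparator
`π*` is bounded by the inf/sup decomposition of Lemma 1. -/
theorem proximal_pessimism_suboptimality_bound {S A : Type*} [Fintype S] [Fintype A]
    [Nonempty S] [Nonempty A] [DecidableEq S]
    (P PD : Matrix (S × A) S ℝ)
    (hP0 : ∀ p s, 0 ≤ P p s) (hP1 : ∀ p, ∑ s, P p s = 1)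
    (hPD0 : ∀ p s, 0 ≤ PD p s) (hPD1 : ∀ p, ∑ s, PD p s = 1)
    (r rD : S × A → ℝ) (γ : ℝ) (hγ0 : 0 ≤ γ) (hγ1 : γ < 1)
    (ρ : S → ℝ) (hρ0 : ∀ s, 0 ≤ ρ s) (hρ1 : ∑ s, ρ s = 1)
    (Pol : Finset (S → A → ℝ)) (hPolne : Pol.Nonempty)
    (hPol : ∀ π ∈ Pol, (∀ s a, 0 ≤ π s a) ∧ (∀ s, ∑ a, π s a = 1))
    (πstar : S → A → ℝ) (hπstar0 : ∀ s a, 0 ≤ πstar s a) (hπstar1 : ∀ s, ∑ a, πstar s a = 1)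
    (α : ℝ) (hα : 0 < α)
    (p u : (S → A → ℝ) → S → ℝ)
    (hu0 : ∀ π ∈ Pol, ∀ s, 0 ≤ u π s)
    (hub : ∀ π ∈ Pol,
      |∑ s, ρ s * (valVec γ PD rD π s - valVec γ P r π s)|
        ≤ ∑ s, occVec γ PD ρ π s * u π s)
    (πhat : S → A → ℝ) (hπhat : πhat ∈ Pol)
    (hmax : ∀ π ∈ Pol,
      ∑ s, ρ s * valVec γ PD rD π s - ∑ s, occVec γ PD ρ π s * (α * p π s)
        ≤ ∑ s, ρ s * valVec γ PD rD πhat s - ∑ s, occVec γ PD ρ πhat s * (α * p πhat s)) :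
    ∑ s, ρ s * (valVec γ P r πstar s - valVec γ P r πhat s)
      ≤ Pol.inf' hPolne (fun π =>
            ∑ s, ρ s * (valVec γ P r πstar s - valVec γ P r π s)
              + ∑ s, occVec γ PD ρ π s * (u π s + α * p π s))
        + Pol.sup' hPolne (fun π => ∑ s, occVec γ PD ρ π s * (u π s - α * p π s)) := by
  rw [← sub_le_iff_le_add]
  refine Finset.le_inf' _ _ fun π hπ => ?_
  rw [sub_le_iff_le_add]
  have hsup := Finset.le_sup'
    (fun π => ∑ s, occVec γ PD ρ π s * (u π s - α * p π s)) hπhat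
  have h1 := abs_le.mp (hub π hπ)
  have h2 := abs_le.mp (hub πhat hπhat)
  have hm := hmax π hπ
  simp only [mul_sub, mul_add, Finset.sum_sub_distrib, Finset.sum_add_distrib] at *
  linarith [h1.1, h1.2, h2.1, h2.2, hm, hsup]
end

section
/- (Theorem 1, key condition.) Let Π be a finite nonempty policy class, π* a fixed comparator policy, α > 0, and assume d^D(s) > 0 for all states s. For each π ∈ Π let Dis(π) : S → ℝ be a nonnegative vector and u^π : S → ℝ any vector, and set w^π(s) := d_D^π(s)/d^D(s). For a penalty assignment p, define INF_p(π) := ⟨ρ, V^{π*} − V^π⟩ + ⟨d_D^π, u^π + α·p(π)⟩ and SUP_p(π) := ⟨d_D^π, u^π − α·p(π)⟩. Let π̄₁ ∈ Π maximize SUP over Π for the state-aware penalty p(π) = w^π·Dis(π) (entrywise product), and let π̄₂ ∈ Π minimize INF over Π for the penalty p(π) = Dis(π). If ⟨d_D^{π̄₁}, (w^{π̄₁} − 1)·Dis(π̄₁)⟩ ≥ ⟨d_D^{π̄₂}, (w^{π̄₂} − 1)·Dis(π̄₂)⟩, then max_{π∈Π} SUP_{w·Dis}(π) + min_{π∈Π}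 INF_{w·Dis}(π) ≤ max_{π∈Π} SUP_{Dis}(π) + min_{π∈Π} INF_{Dis}(π). -/
open Matrix Finset

/-- Theorem 1, key condition. With state-distribution ratios
`w^π(s) = d_D^π(s)/d^D(s)`, if the state-aware correction at the maximizer `π̄₁` of the
state-aware supremum term dominates that at the minimizer `π̄₂` of the plain infimum term,
then the state-aware suboptimality upper bound is at most the plain one. -/
theorem state_aware_key_condition {S A : Type*} [Fintype S] [Fintype A]
    [Nonempty S] [Nonempty A] [DecidableEq S]
    (P PD : Matrix (S × A) S ℝ)
    (hP0 : ∀ p s, 0 ≤ P p s) (hP1 : ∀ p, ∑ s, P p s = 1)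
    (hPD0 : ∀ p s, 0 ≤ PD p s) (hPD1 : ∀ p, ∑ s, PD p s = 1)
    (r : S × A → ℝ) (γ : ℝ) (hγ0 : 0 ≤ γ) (hγ1 : γ < 1)
    (ρ : S → ℝ) (hρ0 : ∀ s, 0 ≤ ρ s) (hρ1 : ∑ s, ρ s = 1)
    (Pol : Finset (S → A → ℝ)) (hPolne : Pol.Nonempty)
    (hPol : ∀ π ∈ Pol, (∀ s a, 0 ≤ π s a) ∧ (∀ s, ∑ a, π s a = 1))
    (πstar : S → A → ℝ) (hπstar0 : ∀ s a, 0 ≤ πstar s a) (hπstar1 : ∀ s, ∑ a, πstar s a = 1)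
    (α : ℝ) (hα : 0 < α)
    (dDat : S → ℝ) (hdDat : ∀ s, 0 < dDat s)
    (Dis u : (S → A → ℝ) → S → ℝ)
    (hDis : ∀ π ∈ Pol, ∀ s, 0 ≤ Dis π s)
    (π₁ : S → A → ℝ) (hπ₁ : π₁ ∈ Pol)
    (hπ₁max : ∀ π ∈ Pol,
      ∑ s, noccVec γ PD ρ π s * (u π s - α * (noccVec γ PD ρ π s / dDat s * Dis π s))
        ≤ ∑ s, noccVec γ PD ρ π₁ s * (u π₁ s - α * (noccVec γ PD ρ π₁ s / dDat s * Dis π₁ s)))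
    (π₂ : S → A → ℝ) (hπ₂ : π₂ ∈ Pol)
    (hπ₂min : ∀ π ∈ Pol,
      ∑ s, ρ s * (valVec γ P r πstar s - valVec γ P r π₂ s)
          + ∑ s, noccVec γ PD ρ π₂ s * (u π₂ s + α * Dis π₂ s)
        ≤ ∑ s, ρ s * (valVec γ P r πstar s - valVec γ P r π s)
          + ∑ s, noccVec γ PD ρ π s * (u π s + α * Dis π s))
    (hkey : ∑ s, noccVec γ PD ρ π₂ s * ((noccVec γ PD ρ π₂ s / dDat s - 1) * Dis π₂ s)
        ≤ ∑ s, noccVec γ PD ρ π₁ s * ((noccVec γ PD ρ π₁ s / dDat s - 1) * Dis π₁ s)) :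
    Pol.sup' hPolne (fun π =>
        ∑ s, noccVec γ PD ρ π s * (u π s - α * (noccVec γ PD ρ π s / dDat s * Dis π s)))
      + Pol.inf' hPolne (fun π =>
          ∑ s, ρ s * (valVec γ P r πstar s - valVec γ P r π s)
            + ∑ s, noccVec γ PD ρ π s * (u π s + α * (noccVec γ PD ρ π s / dDat s * Dis π s)))
    ≤ Pol.sup' hPolne (fun π => ∑ s, noccVec γ PD ρ π s * (u π s - α * Dis π s))
      + Pol.inf' hPolne (fun π =>
          ∑ s, ρ s * (valVec γ P r πstar s - valVec γ P r π s)
            + ∑ s, noccVec γ PD ρ π s * (u π s + α * Dis π s)) := by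

  set d := noccVec γ PD ρ with hd
  have h1 : Pol.sup' hPolne (fun π =>
      ∑ s, d π s * (u π s - α * (d π s / dDat s * Dis π s)))
      ≤ ∑ s, d π₁ s * (u π₁ s - α * (d π₁ s / dDat s * Dis π₁ s)) :=
    Finset.sup'_le _ _ hπ₁max
  have h2 : Pol.inf' hPolne (fun π =>
      ∑ s, ρ s * (valVec γ P r πstar s - valVec γ P r π s)
        + ∑ s, d π s * (u π s + α * (d π s / dDat s * Dis π s)))
      ≤ ∑ s, ρ s * (valVec γ P r πstar s - valVec γ P r π₂ s)
        + ∑ s, d π₂ s * (u π₂ s + α * (d π₂ s / dDat s * Dis π₂ s)) :=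
    Finset.inf'_le _ hπ₂
  have h3 : ∑ s, d π₁ s * (u π₁ s - α * Dis π₁ s)
      ≤ Pol.sup' hPolne (fun π => ∑ s, d π s * (u π s - α * Dis π s)) :=
    Finset.le_sup' (fun π => ∑ s, d π s * (u π s - α * Dis π s)) hπ₁
  have h4 : ∑ s, ρ s * (valVec γ P r πstar s - valVec γ P r π₂ s)
        + ∑ s, d π₂ s * (u π₂ s + α * Dis π₂ s)
      ≤ Pol.inf' hPolne (fun π =>
          ∑ s, ρ s * (valVec γ P r πstar s - valVec γ P r π s)
            + ∑ s, d π s * (u π s + α * Dis π s)) :=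
    Finset.le_inf' _ _ hπ₂min
  have e1 : ∑ s, d π₁ s * (u π₁ s - α * (d π₁ s / dDat s * Dis π₁ s))
      = ∑ s, d π₁ s * (u π₁ s - α * Dis π₁ s)
        - α * ∑ s, d π₁ s * ((d π₁ s / dDat s - 1) * Dis π₁ s) := by
    rw [Finset.mul_sum, ← Finset.sum_sub_distrib]
    exact Finset.sum_congr rfl fun s _ => by ring
  have e2 : ∑ s, d π₂ s * (u π₂ s + α * (d π₂ s / dDat s * Dis π₂ s))
      = ∑ s, d π₂ s * (u π₂ s + α * Dis π₂ s)
        + α * ∑ s, d π₂ s * ((d π₂ s / dDat s - 1) * Dis π₂ s) := by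
    rw [Finset.mul_sum, ← Finset.sum_add_distrib]
    exact Finset.sum_congr rfl fun s _ => by ring
  have hkey' := mul_le_mul_of_nonneg_left hkey hα.le
  linarith [h1, h2, h3, h4]
end

section
/- (Proof step of Theorem 2, inequality (16).) In the setting of Theorem 1 with d_D^π the normalized discounted occupancy (entrywise nonnegative, summing to 1), assume dataset counts n : S × A → ℕ with n(s) := ∑_a n(s,a) ≥ 1 for all s, |D| := ∑_s n(s), d^D(s) := n(s)/|D|, u^π(s) := C₀·∑_a π(a|s)·n(s,a)^{−1/2} with C₀ > 0, every π ∈ Π data-supported (π(a|s) > 0 implies n(s,a) ≥ 1), Dis(π)(s) ≥ 0 for all π ∈ Π and s, and α = α'/|D| with α' > 0. Suppose s₁ minimizes d^D (equivalently minimizes n(s)), and there are π₀ ∈ Π, ε_d ∈ (0,1), Δ_β > 0 with d_D^{π₀}(s₁) > ε_d and Dis(π₀)(s) ≤ Δ_β for all s. If π̄₁ maximizes π ↦ ⟨d_D^π, u^π − α·w^π·Dis(π)⟩ over Π, where w^π(s) := d_D^π(s)/d^D(s), then ⟨d_D^{π̄₁}, u^{π̄₁}⟩ ≥ C₀·ε_d/√(n(s₁))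 − α'·Δ_β/n(s₁). -/
open Matrix Finset

/-! The normalized occupancy `d^π` is a probability vector: `(I − γ Aπ P_D)⁻¹ = ∑ₖ γᵏ (Aπ P_D)ᵏ`
is entrywise nonnegative and `(I − γ Aπ P_D) 𝟙 = (1 − γ) 𝟙`.
Since `π₁` maximizes the state-aware objective, its value is at least the objective of `π₀`.
The reward part of that objective is at least `d^{π₀}(s₁) · u^{π₀}(s₁) ≥ ε_d · C₀ / √n(s₁)`,
because every action `π₀` plays at `s₁` has `n(s₁, a) ≤ n(s₁)`. Its penalty is at most
`α Δ_β / d^D(s₁) = α' Δ_β / n(s₁)`, because an occupancy distribution satisfies `d(s)² ≤ d(s)`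
and `s₁` minimizes `d^D`. Dropping the (nonnegative) penalty of `π₁` gives the claim. -/

namespace Matrix

variable {n : Type*} [Fintype n] [DecidableEq n] {M : Matrix n n ℝ} {γ : ℝ}

section LinftyOpNorm

attribute [local instance] Matrix.linftyOpNormedRing Matrix.linftyOpNormedSpace

theorem linfty_opNorm_le_one_of_mem_rowStochastic (hM : M ∈ rowStochastic ℝ n) : ‖M‖ ≤ 1 := by
  have : ‖M‖₊ ≤ 1 := by
    rw [linfty_opNNNorm_def]
    refine Finset.sup_le fun i _ => le_of_eq ?_
    rw [← NNReal.coe_inj]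
    push_cast
    simp only [Real.norm_of_nonneg (nonneg_of_mem_rowStochastic hM),
      sum_row_of_mem_rowStochastic hM]
  exact_mod_cast this

theorem linfty_opNorm_smul_lt_one_of_mem_rowStochastic (hM : M ∈ rowStochastic ℝ n)
    (hγ0 : 0 ≤ γ) (hγ1 : γ < 1) : ‖γ • M‖ < 1 :=
  calc ‖γ • M‖ = γ * ‖M‖ := by rw [norm_smul, Real.norm_of_nonneg hγ0]
    _ ≤ γ * 1 := by gcongr; exact linfty_opNorm_le_one_of_mem_rowStochastic hM
    _ < 1 := by linarith

theorem isUnit_one_sub_smul_of_mem_rowStochastic (hM : M ∈ rowStochastic ℝ n)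
    (hγ0 : 0 ≤ γ) (hγ1 : γ < 1) : IsUnit (1 - γ • M) :=
  isUnit_one_sub_of_norm_lt_one (linfty_opNorm_smul_lt_one_of_mem_rowStochastic hM hγ0 hγ1)

theorem inv_one_sub_smul_nonneg_of_mem_rowStochastic (hM : M ∈ rowStochastic ℝ n)
    (hγ0 : 0 ≤ γ) (hγ1 : γ < 1) (i j : n) : 0 ≤ (1 - γ • M)⁻¹ i j := by
  have hsum : HasSum (fun k : ℕ => (γ • M) ^ k) (1 - γ • M)⁻¹ := by
    rw [nonsing_inv_eq_ringInverse]
    exact hasSum_geom_series_inverse _ (linfty_opNorm_smul_lt_one_of_mem_rowStochastic hM hγ0 hγ1)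
  refine HasSum.nonneg (fun k => ?_) (Pi.hasSum.1 (Pi.hasSum.1 hsum i) j)
  rw [smul_pow]
  exact mul_nonneg (pow_nonneg hγ0 k) (nonneg_of_mem_rowStochastic (pow_mem hM k))

end LinftyOpNorm

theorem sum_vecMul_one_sub_smul_of_mem_rowStochastic (hM : M ∈ rowStochastic ℝ n) (x : n → ℝ) :
    ∑ j, (x ᵥ* (1 - γ • M)) j = (1 - γ) * ∑ j, x j := by
  rw [← dotProduct_one, ← dotProduct_one, ← dotProduct_mulVec, sub_mulVec, one_mulVec,
    smul_mulVec, one_vecMul_of_mem_rowStochastic hM, dotProduct_sub, dotProduct_smul, smul_eq_mul]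
  ring

theorem smul_vecMul_inv_one_sub_smul_mem_stdSimplex (hM : M ∈ rowStochastic ℝ n)
    (hγ0 : 0 ≤ γ) (hγ1 : γ < 1) {x : n → ℝ} (hx : x ∈ stdSimplex ℝ n) :
    (1 - γ) • (x ᵥ* (1 - γ • M)⁻¹) ∈ stdSimplex ℝ n := by
  set v := x ᵥ* (1 - γ • M)⁻¹
  refine ⟨fun j => smul_nonneg (sub_nonneg.2 hγ1.le) ?_, ?_⟩
  · exact sum_nonneg fun i _ =>
      mul_nonneg (hx.1 i) (inv_one_sub_smul_nonneg_of_mem_rowStochastic hM hγ0 hγ1 i j)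
  · have hv : v ᵥ* (1 - γ • M) = x := by
      rw [vecMul_vecMul, nonsing_inv_mul _ ((isUnit_iff_isUnit_det _).mp
        (isUnit_one_sub_smul_of_mem_rowStochastic hM hγ0 hγ1)), vecMul_one]
    simp only [Pi.smul_apply, smul_eq_mul, ← mul_sum]
    rw [← sum_vecMul_one_sub_smul_of_mem_rowStochastic hM, hv, hx.2]

end Matrix

section Occupancy

variable {S A : Type*} [Fintype S] [Fintype A] [DecidableEq S]
  {P : Matrix (S × A) S ℝ} {π : S → A → ℝ}

theorem actMat_mul_apply (π : S → A → ℝ) (P : Matrix (S × A) S ℝ) (i j : S) :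
    (actMat π * P) i j = ∑ a, π i a * P (i, a) j := by
  rw [mul_apply, Fintype.sum_prod_type]
  simp only [actMat, of_apply, ite_mul, zero_mul]
  rw [sum_comm]
  simp

theorem actMat_mul_mem_rowStochastic (hP0 : ∀ p s, 0 ≤ P p s) (hP1 : ∀ p, ∑ s, P p s = 1)
    (hπ0 : ∀ s a, 0 ≤ π s a) (hπ1 : ∀ s, ∑ a, π s a = 1) :
    actMat π * P ∈ rowStochastic ℝ S := by
  refine mem_rowStochastic_iff_sum.2 ⟨fun i j => ?_, fun i => ?_⟩
  · rw [actMat_mul_apply]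
    exact sum_nonneg fun a _ => mul_nonneg (hπ0 i a) (hP0 _ j)
  · simp only [actMat_mul_apply]
    rw [sum_comm]
    simp only [← mul_sum, hP1, mul_one, hπ1]

theorem noccVec_mem_stdSimplex (hP0 : ∀ p s, 0 ≤ P p s) (hP1 : ∀ p, ∑ s, P p s = 1)
    {γ : ℝ} (hγ0 : 0 ≤ γ) (hγ1 : γ < 1) {ρ : S → ℝ} (hρ : ρ ∈ stdSimplex ℝ S)
    (hπ0 : ∀ s a, 0 ≤ π s a) (hπ1 : ∀ s, ∑ a, π s a = 1) :
    noccVec γ P ρ π ∈ stdSimplex ℝ S :=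
  smul_vecMul_inv_one_sub_smul_mem_stdSimplex
    (actMat_mul_mem_rowStochastic hP0 hP1 hπ0 hπ1) hγ0 hγ1 hρ

end Occupancy

/-- The support condition is needed because `(√0)⁻¹ = 0`. -/
theorem inv_sqrt_sum_le_sum_mul_inv_sqrt {A : Type*} [Fintype A] {p : A → ℝ} {m : A → ℕ}
    (hp : p ∈ stdSimplex ℝ A) (hsupp : ∀ a, 0 < p a → 1 ≤ m a) :
    (√(↑(∑ a, m a) : ℝ))⁻¹ ≤ ∑ a, p a * (√(m a : ℝ))⁻¹ :=
  calc (√(↑(∑ a, m a) : ℝ))⁻¹ = ∑ a, p a * (√(↑(∑ a, m a) : ℝ))⁻¹ := by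
        rw [← sum_mul, hp.2, one_mul]
    _ ≤ ∑ a, p a * (√(m a : ℝ))⁻¹ := sum_le_sum fun a _ => by
        rcases (hp.1 a).eq_or_lt with h | h
        · simp [← h]
        · have hm : (1 : ℝ) ≤ m a := by exact_mod_cast hsupp a h
          gcongr
          exact_mod_cast single_le_sum (fun b _ => Nat.zero_le (m b)) (mem_univ a)

section StateAwareObjective

variable {ι : Type*} [Fintype ι]

theorem mul_le_sum_mul_of_le {d c u : ι → ℝ} (hd : ∀ i, 0 ≤ d i) (hc : ∀ i, 0 ≤ c i)
    (hcu : ∀ i, c i ≤ u i) {ε : ℝ} {i₀ : ι} (hε : ε ≤ d i₀) : ε * c i₀ ≤ ∑ i, d i * u i :=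
  calc ε * c i₀ ≤ d i₀ * u i₀ := mul_le_mul hε (hcu i₀) (hc i₀) (hd i₀)
    _ ≤ ∑ i, d i * u i :=
      single_le_sum (fun i _ => mul_nonneg (hd i) ((hc i).trans (hcu i))) (mem_univ i₀)

/-- The state-aware objective `⟨d, u − α · w · Dis⟩` with importance weight `w = d / d^D`. -/
noncomputable def stateAwareObjective (d u dD Dis : ι → ℝ) (α : ℝ) : ℝ :=
  ∑ i, d i * (u i - α * (d i / dD i * Dis i))

variable {d u dD Dis : ι → ℝ} {α : ℝ}

theorem stateAwareObjective_le (hd : ∀ i, 0 ≤ d i) (hdD : ∀ i, 0 ≤ dD i) (hα : 0 ≤ α)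
    (hDis : ∀ i, 0 ≤ Dis i) : stateAwareObjective d u dD Dis α ≤ ∑ i, d i * u i :=
  sum_le_sum fun i _ => mul_le_mul_of_nonneg_left
    (sub_le_self _ (by have := hd i; have := hdD i; have := hDis i; positivity)) (hd i)

theorem sub_le_stateAwareObjective (hd : d ∈ stdSimplex ℝ ι) {i₀ : ι} (hdD₀ : 0 < dD i₀)
    (hdD : ∀ i, dD i₀ ≤ dD i) (hα : 0 ≤ α) {B : ℝ} (hDis : ∀ i, 0 ≤ Dis i)
    (hDisB : ∀ i, Dis i ≤ B) :
    ∑ i, d i * u i - α * B / dD i₀ ≤ stateAwareObjective d u dD Dis α := by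
  have hpen : ∀ i, α * (d i / dD i * Dis i) ≤ α * B / dD i₀ := fun i => by
    have hd1 : d i ≤ 1 := hd.2 ▸ single_le_sum (fun j _ => hd.1 j) (mem_univ i)
    have : d i / dD i ≤ 1 / dD i₀ := div_le_div₀ zero_le_one hd1 hdD₀ (hdD i)
    calc α * (d i / dD i * Dis i) ≤ α * (1 / dD i₀ * B) :=
          mul_le_mul_of_nonneg_left (mul_le_mul this (hDisB i) (hDis i) (by positivity)) hα
      _ = α * B / dD i₀ := by ring
  calc ∑ i, d i * u i - α * B / dD i₀ = ∑ i, d i * (u i - α * B / dD i₀) := by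
        simp only [mul_sub, sum_sub_distrib, ← sum_mul, hd.2, one_mul]
    _ ≤ stateAwareObjective d u dD Dis α :=
        sum_le_sum fun i _ => mul_le_mul_of_nonneg_left (by linarith [hpen i]) (hd.1 i)

end StateAwareObjective

theorem state_aware_sup_uncertainty_lower_bound_general {S A : Type*} [Fintype S] [Fintype A]
    [DecidableEq S]
    (PD : Matrix (S × A) S ℝ)
    (hPD0 : ∀ p s, 0 ≤ PD p s) (hPD1 : ∀ p, ∑ s, PD p s = 1)
    (γ : ℝ) (hγ0 : 0 ≤ γ) (hγ1 : γ < 1)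
    (ρ : S → ℝ) (hρ0 : ∀ s, 0 ≤ ρ s) (hρ1 : ∑ s, ρ s = 1)
    (Pol : Finset (S → A → ℝ))
    (hPol : ∀ π ∈ Pol, (∀ s a, 0 ≤ π s a) ∧ (∀ s, ∑ a, π s a = 1))
    (n : S × A → ℕ) (hn : ∀ s : S, 1 ≤ ∑ a, n (s, a))
    (dDat : S → ℝ)
    (hdDat : ∀ s, dDat s = (↑(∑ a, n (s, a)) : ℝ) / (↑(∑ s', ∑ a, n (s', a)) : ℝ))
    (C₀ : ℝ) (hC₀ : 0 < C₀)
    (u : (S → A → ℝ) → S → ℝ)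
    (hu : ∀ π s, u π s = C₀ * ∑ a, π s a * (Real.sqrt (n (s, a)))⁻¹)
    (hsupp : ∀ π ∈ Pol, ∀ s a, 0 < π s a → 1 ≤ n (s, a))
    (Dis : (S → A → ℝ) → S → ℝ) (hDis : ∀ π ∈ Pol, ∀ s, 0 ≤ Dis π s)
    (α α' : ℝ) (hα'0 : 0 < α')
    (hα : α = α' / (↑(∑ s', ∑ a, n (s', a)) : ℝ))
    (s₁ : S) (hs₁ : ∀ s, dDat s₁ ≤ dDat s)
    (π₀ : S → A → ℝ) (hπ₀ : π₀ ∈ Pol)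
    (εd Δβ : ℝ)
    (hπ₀occ : εd < noccVec γ PD ρ π₀ s₁) (hπ₀Dis : ∀ s, Dis π₀ s ≤ Δβ)
    (π₁ : S → A → ℝ) (hπ₁ : π₁ ∈ Pol)
    (hπ₁max : ∀ π ∈ Pol,
      ∑ s, noccVec γ PD ρ π s * (u π s - α * (noccVec γ PD ρ π s / dDat s * Dis π s))
        ≤ ∑ s, noccVec γ PD ρ π₁ s
            * (u π₁ s - α * (noccVec γ PD ρ π₁ s / dDat s * Dis π₁ s))) :
    C₀ * εd / Real.sqrt (↑(∑ a, n (s₁, a)) : ℝ) - α' * Δβ / (↑(∑ a, n (s₁, a)) : ℝ)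
      ≤ ∑ s, noccVec γ PD ρ π₁ s * u π₁ s := by
  obtain ⟨hπ₀0, hπ₀1⟩ := hPol π₀ hπ₀
  obtain ⟨hπ₁0, hπ₁1⟩ := hPol π₁ hπ₁
  have hd₀ := noccVec_mem_stdSimplex hPD0 hPD1 hγ0 hγ1 ⟨hρ0, hρ1⟩ hπ₀0 hπ₀1
  have hd₁ := noccVec_mem_stdSimplex hPD0 hPD1 hγ0 hγ1 ⟨hρ0, hρ1⟩ hπ₁0 hπ₁1
  have hn₁ : (0 : ℝ) < ↑(∑ a, n (s₁, a)) := by exact_mod_cast hn s₁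
  have hD : (0 : ℝ) < ↑(∑ s', ∑ a, n (s', a)) := by
    have := single_le_sum (f := fun s => ∑ a, n (s, a)) (fun s _ => Nat.zero_le _) (mem_univ s₁)
    exact hn₁.trans_le (by exact_mod_cast this)
  have hα0 : 0 ≤ α := by rw [hα]; positivity
  have hbonus : ∀ s, C₀ * (√(↑(∑ a, n (s, a)) : ℝ))⁻¹ ≤ u π₀ s := fun s => by
    rw [hu]
    exact mul_le_mul_of_nonneg_left
      (inv_sqrt_sum_le_sum_mul_inv_sqrt ⟨hπ₀0 s, hπ₀1 s⟩ (hsupp π₀ hπ₀ s)) hC₀.le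
  have hreward : C₀ * εd / √(↑(∑ a, n (s₁, a)) : ℝ) ≤ ∑ s, noccVec γ PD ρ π₀ s * u π₀ s :=
    (by ring : _ = εd * (C₀ * (√(↑(∑ a, n (s₁, a)) : ℝ))⁻¹)).trans_le
      (mul_le_sum_mul_of_le hd₀.1 (fun s => by positivity) hbonus hπ₀occ.le)
  have hpenalty : α * Δβ / dDat s₁ = α' * Δβ / ↑(∑ a, n (s₁, a)) := by
    rw [hα, hdDat]
    field_simp
  have hdDat₁ : 0 < dDat s₁ := by rw [hdDat]; positivity
  calc C₀ * εd / √(↑(∑ a, n (s₁, a)) : ℝ) - α' * Δβ / ↑(∑ a, n (s₁, a))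
      ≤ ∑ s, noccVec γ PD ρ π₀ s * u π₀ s - α * Δβ / dDat s₁ := by rw [hpenalty]; linarith
    _ ≤ stateAwareObjective (noccVec γ PD ρ π₀) (u π₀) dDat (Dis π₀) α :=
        sub_le_stateAwareObjective hd₀ hdDat₁ hs₁ hα0 (hDis π₀ hπ₀) hπ₀Dis
    _ ≤ stateAwareObjective (noccVec γ PD ρ π₁) (u π₁) dDat (Dis π₁) α := hπ₁max π₀ hπ₀
    _ ≤ ∑ s, noccVec γ PD ρ π₁ s * u π₁ s :=
        stateAwareObjective_le hd₁.1 (fun s => by rw [hdDat]; positivity) hα0 (hDis π₁ hπ₁)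

/-- proof step of Theorem 2, inequality (16). With dataset counts `n`,
Hoeffding uncertainty `u^π(s) = C₀ ∑ₐ π(a|s) n(s,a)^{-1/2}`, `α = α'/|D|`, and `s₁` the state
of minimal empirical density, any maximizer `π̄₁` of the state-aware supremum term satisfies
`⟨d_D^{π̄₁}, u^{π̄₁}⟩ ≥ C₀ ε_d/√(n(s₁)) − α' Δ_β/n(s₁)`. -/
theorem state_aware_sup_uncertainty_lower_bound {S A : Type*} [Fintype S] [Fintype A]
    [Nonempty S] [Nonempty A] [DecidableEq S]
    (PD : Matrix (S × A) S ℝ)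
    (hPD0 : ∀ p s, 0 ≤ PD p s) (hPD1 : ∀ p, ∑ s, PD p s = 1)
    (γ : ℝ) (hγ0 : 0 ≤ γ) (hγ1 : γ < 1)
    (ρ : S → ℝ) (hρ0 : ∀ s, 0 ≤ ρ s) (hρ1 : ∑ s, ρ s = 1)
    (Pol : Finset (S → A → ℝ)) (hPolne : Pol.Nonempty)
    (hPol : ∀ π ∈ Pol, (∀ s a, 0 ≤ π s a) ∧ (∀ s, ∑ a, π s a = 1))
    (n : S × A → ℕ) (hn : ∀ s : S, 1 ≤ ∑ a, n (s, a))
    (dDat : S → ℝ)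
    (hdDat : ∀ s, dDat s = (↑(∑ a, n (s, a)) : ℝ) / (↑(∑ s', ∑ a, n (s', a)) : ℝ))
    (C₀ : ℝ) (hC₀ : 0 < C₀)
    (u : (S → A → ℝ) → S → ℝ)
    (hu : ∀ π s, u π s = C₀ * ∑ a, π s a * (Real.sqrt (n (s, a)))⁻¹)
    (hsupp : ∀ π ∈ Pol, ∀ s a, 0 < π s a → 1 ≤ n (s, a))
    (Dis : (S → A → ℝ) → S → ℝ) (hDis : ∀ π ∈ Pol, ∀ s, 0 ≤ Dis π s)
    (α α' : ℝ) (hα'0 : 0 < α')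
    (hα : α = α' / (↑(∑ s', ∑ a, n (s', a)) : ℝ))
    (s₁ : S) (hs₁ : ∀ s, dDat s₁ ≤ dDat s)
    (π₀ : S → A → ℝ) (hπ₀ : π₀ ∈ Pol)
    (εd Δβ : ℝ) (hεd0 : 0 < εd) (hεd1 : εd < 1) (hΔβ : 0 < Δβ)
    (hπ₀occ : εd < noccVec γ PD ρ π₀ s₁) (hπ₀Dis : ∀ s, Dis π₀ s ≤ Δβ)
    (π₁ : S → A → ℝ) (hπ₁ : π₁ ∈ Pol)
    (hπ₁max : ∀ π ∈ Pol,
      ∑ s, noccVec γ PD ρ π s * (u π s - α * (noccVec γ PD ρ π s / dDat s * Dis π s))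
        ≤ ∑ s, noccVec γ PD ρ π₁ s
            * (u π₁ s - α * (noccVec γ PD ρ π₁ s / dDat s * Dis π₁ s))) :
    C₀ * εd / Real.sqrt (↑(∑ a, n (s₁, a)) : ℝ) - α' * Δβ / (↑(∑ a, n (s₁, a)) : ℝ)
      ≤ ∑ s, noccVec γ PD ρ π₁ s * u π₁ s :=
  state_aware_sup_uncertainty_lower_bound_general PD hPD0 hPD1 γ hγ0 hγ1 ρ hρ0 hρ1 Pol hPol n hn
    dDat hdDat C₀ hC₀ u hu hsupp Dis hDis α α' hα'0 hα s₁ hs₁ π₀ hπ₀ εd Δβ hπ₀occ hπ₀Dis π₁ hπ₁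
    hπ₁max
end

section
/- (Proof step of Theorem 2, inequality (17).) Let S and A be nonempty finite types, n : S × A → ℕ with n(s) := ∑_a n(s,a) ≥ 1 for every s, and π̂β(a|s) := n(s,a)/n(s). Let π : S → A → ℝ be a policy (π(a|s) ≥ 0, ∑_a π(a|s) = 1) with π(a|s) > 0 implying n(s,a) ≥ 1, and let ε_β ∈ (0,1] satisfy π̂β(a|s) ≥ ε_β whenever n(s,a) ≥ 1. Then for every state s, ∑_a π(a|s)·n(s,a)^{−1/2} ≤ n(s)^{−1/2}/√ε_β (summands with π(a|s) = 0 taken to be 0). -/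
/-- proof step of Theorem 2, inequality (17). For dataset counts `n`,
empirical behavior policy `π̂β(a|s) = n(s,a)/n(s)`, a data-supported policy `π`, and a lower
bound `εβ` on the empirical behavior probabilities of seen actions, the state-wise uncertainty
`∑ₐ π(a|s)·n(s,a)^{-1/2}` is at most `n(s)^{-1/2}/√εβ`. -/
theorem uncertainty_bound_by_behavior_lb {S A : Type*} [Fintype S] [Fintype A]
    [Nonempty S] [Nonempty A]
    (n : S → A → ℕ) (hn : ∀ s, 1 ≤ ∑ a, n s a)
    (π : S → A → ℝ) (hπ0 : ∀ s a, 0 ≤ π s a) (hπ1 : ∀ s, ∑ a, π s a = 1)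
    (hsupp : ∀ s a, 0 < π s a → 1 ≤ n s a)
    (εβ : ℝ) (hεβ0 : 0 < εβ) (hεβ1 : εβ ≤ 1)
    (hβ : ∀ s a, 1 ≤ n s a → εβ ≤ (n s a : ℝ) / (↑(∑ a', n s a') : ℝ)) :
    ∀ s, ∑ a, π s a * (Real.sqrt (n s a))⁻¹
      ≤ (Real.sqrt (↑(∑ a, n s a) : ℝ))⁻¹ / Real.sqrt εβ := by
  intro s
  have hNs : (0 : ℝ) < (↑(∑ a, n s a) : ℝ) := by
    exact_mod_cast Nat.lt_of_lt_of_le Nat.zero_lt_one (hn s)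
  have key : ∀ a, π s a * (Real.sqrt (n s a))⁻¹
      ≤ π s a * ((Real.sqrt (↑(∑ a, n s a) : ℝ))⁻¹ / Real.sqrt εβ) := by
    intro a
    rcases eq_or_lt_of_le (hπ0 s a) with h | h
    · simp [← h]
    · apply mul_le_mul_of_nonneg_left _ (hπ0 s a)
      have hna := hsupp s a h
      have hβa := hβ s a hna
      have hge : εβ * (↑(∑ a, n s a) : ℝ) ≤ (n s a : ℝ) := by
        rw [le_div_iff₀ hNs] at hβa
        exact hβa
      have hsqrt : Real.sqrt εβ * Real.sqrt (↑(∑ a, n s a) : ℝ)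
          ≤ Real.sqrt (n s a) := by
        rw [← Real.sqrt_mul hεβ0.le]
        exact Real.sqrt_le_sqrt hge
      have hpos : 0 < Real.sqrt εβ * Real.sqrt (↑(∑ a, n s a) : ℝ) :=
        mul_pos (Real.sqrt_pos.2 hεβ0) (Real.sqrt_pos.2 hNs)
      have := inv_anti₀ hpos hsqrt
      calc (Real.sqrt (n s a))⁻¹
          ≤ (Real.sqrt εβ * Real.sqrt (↑(∑ a, n s a) : ℝ))⁻¹ := this
        _ = (Real.sqrt (↑(∑ a, n s a) : ℝ))⁻¹ / Real.sqrt εβ := by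
            rw [mul_inv, div_eq_mul_inv, mul_comm]
  calc ∑ a, π s a * (Real.sqrt (n s a))⁻¹
      ≤ ∑ a, π s a * ((Real.sqrt (↑(∑ a, n s a) : ℝ))⁻¹ / Real.sqrt εβ) :=
        Finset.sum_le_sum fun a _ => key a
    _ = (Real.sqrt (↑(∑ a, n s a) : ℝ))⁻¹ / Real.sqrt εβ := by
        rw [← Finset.sum_mul, hπ1 s, one_mul]
end

section
/- (Equivalence of updates (7) and (8).) In the finite tabular setting, let P_D be a transition matrix, r_D : S × A → ℝ a reward vector, π and π̂β policies with π̂β(a|s) > 0 for all s, a, γ ∈ [0,1), α > 0, w : S → ℝ, and e(s,a) := w(s)·(π(a|s) − π̂β(a|s))/π̂β(a|s). If Q, Q' : S × A → ℝ satisfy Q' = r_D + γ·P_D·Aπ·Q − α·e, then the vectors V := AπQ and V' := AπQ' (i.e., V(s) = ∑_a π(a|s)·Q(s,a)) satisfy V' = Aπ(r_D + γ·P_D·V) − α·w·DisCQL, where DisCQL(s) := ∑_a π(a|s)·(π(a|s)/π̂β(a|s) − 1) and the product w·DisCQL is entrywise. -/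
open Matrix Finset

section

variable {S A : Type*} [Fintype A] [DecidableEq S]

noncomputable def saPenalty (w : S → ℝ) (π πβ : S → A → ℝ) (p : S × A) : ℝ :=
  w p.1 * (π p.1 p.2 - πβ p.1 p.2) / πβ p.1 p.2

noncomputable def disCQL (π πβ : S → A → ℝ) (s : S) : ℝ :=
  ∑ a, π s a * (π s a / πβ s a - 1)

variable [Fintype S]

theorem actMat_mulVec_apply (π : S → A → ℝ) (f : S × A → ℝ) (s : S) :
    (actMat π).mulVec f s = ∑ a, π s a * f (s, a) := by
  rw [Matrix.mulVec, dotProduct, Fintype.sum_prod_type, Finset.sum_comm]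
  simp [actMat]

theorem actMat_mulVec_saPenalty (w : S → ℝ) (π πβ : S → A → ℝ) (s : S)
    (hπβ : ∀ a, πβ s a ≠ 0) :
    (actMat π).mulVec (saPenalty w π πβ) s = w s * disCQL π πβ s := by
  rw [actMat_mulVec_apply, disCQL, Finset.mul_sum]
  refine Finset.sum_congr rfl fun a _ => ?_
  have := hπβ a
  simp only [saPenalty]
  field_simp

end

theorem sa_cql_update_equivalence_general {S A : Type*} [Fintype S] [Fintype A]
    [DecidableEq S]
    (PD : Matrix (S × A) S ℝ)
    (rD : S × A → ℝ)
    (π πβ : S → A → ℝ)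
    (hπβ0 : ∀ s a, 0 < πβ s a)
    (γ : ℝ)
    (α : ℝ) (w : S → ℝ)
    (Q Q' : S × A → ℝ)
    (hQ' : ∀ p : S × A, Q' p = rD p + γ * PD.mulVec ((actMat π).mulVec Q) p
        - α * (w p.1 * (π p.1 p.2 - πβ p.1 p.2) / πβ p.1 p.2)) :
    ∀ s, (actMat π).mulVec Q' s
      = (actMat π).mulVec (fun p => rD p + γ * PD.mulVec ((actMat π).mulVec Q) p) s
        - α * (w s * ∑ a, π s a * (π s a / πβ s a - 1)) := by
  intro s
  have hQ'_eq : Q' = (fun p => rD p + γ * PD.mulVec ((actMat π).mulVec Q) p)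
      - α • saPenalty w π πβ := funext hQ'
  rw [hQ'_eq, Matrix.mulVec_sub, Matrix.mulVec_smul, Pi.sub_apply, Pi.smul_apply, smul_eq_mul,
    actMat_mulVec_saPenalty w π πβ s fun a => (hπβ0 s a).ne', disCQL]

/-- equivalence of updates (7) and (8). If `Q'` is obtained from `Q` by the
SA-CQL Q-update `Q' = r_D + γ P_D Aπ Q − α e` with `e(s,a) = w(s)(π(a|s) − π̂β(a|s))/π̂β(a|s)`,
then the corresponding value functions `V = AπQ`, `V' = AπQ'` satisfy the V-update
`V' = Aπ(r_D + γ P_D V) − α·w·DisCQL`. -/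
theorem sa_cql_update_equivalence {S A : Type*} [Fintype S] [Fintype A]
    [Nonempty S] [Nonempty A] [DecidableEq S]
    (PD : Matrix (S × A) S ℝ)
    (hPD0 : ∀ p s, 0 ≤ PD p s) (hPD1 : ∀ p, ∑ s, PD p s = 1)
    (rD : S × A → ℝ)
    (π πβ : S → A → ℝ) (hπ0 : ∀ s a, 0 ≤ π s a) (hπ1 : ∀ s, ∑ a, π s a = 1)
    (hπβ0 : ∀ s a, 0 < πβ s a) (hπβ1 : ∀ s, ∑ a, πβ s a = 1)
    (γ : ℝ) (hγ0 : 0 ≤ γ) (hγ1 : γ < 1)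
    (α : ℝ) (hα : 0 < α) (w : S → ℝ)
    (Q Q' : S × A → ℝ)
    (hQ' : ∀ p : S × A, Q' p = rD p + γ * PD.mulVec ((actMat π).mulVec Q) p
        - α * (w p.1 * (π p.1 p.2 - πβ p.1 p.2) / πβ p.1 p.2)) :
    ∀ s, (actMat π).mulVec Q' s
      = (actMat π).mulVec (fun p => rD p + γ * PD.mulVec ((actMat π).mulVec Q) p) s
        - α * (w s * ∑ a, π s a * (π s a / πβ s a - 1)) :=
  sa_cql_update_equivalence_general PD rD π πβ hπβ0 γ α w Q Q' hQ'
end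

section
/- (Theorem 5, f-state-aware key condition.) Let f : ℝ → ℝ be any function. In the setting of Theorem 1 (finite nonempty policy class Π, fixed comparator π*, α > 0, d^D(s) > 0, nonnegative Dis(π) : S → ℝ, vectors u^π : S → ℝ, w^π(s) := d_D^π(s)/d^D(s), INF_p(π) := ⟨ρ, V^{π*} − V^π⟩ + ⟨d_D^π, u^π + α·p(π)⟩, SUP_p(π) := ⟨d_D^π, u^π − α·p(π)⟩), let π̄₁ ∈ Π maximize SUP over Π for the penalty p(π)(s) = f(w^π(s))·Dis(π)(s), and let π̄₂ ∈ Π minimize INF over Π for the penalty p(π) = Dis(π). If ⟨d_D^{π̄₁}, (f∘w^{π̄₁} − 1)·Dis(π̄₁)⟩ ≥ ⟨d_D^{π̄₂}, (f∘w^{π̄₂} − 1)·Dis(π̄₂)⟩ (entrywise products), then max_{π∈Π} SUP_{f(w)·Dis}(π) + min_{π∈Π} INF_{f(w)·Dis}(π) ≤ max_{π∈Π} SUP_{Dis}(π) + min_{π∈Π} INF_{Dis}(π). -/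
open Matrix Finset

/-- Theorem 5, f-state-aware key condition. With penalties weighted by
`f(w^π(s))` for an arbitrary real function `f`, if the `f`-state-aware correction at the
maximizer `π̄₁` of the `f`-state-aware supremum term dominates that at the minimizer `π̄₂` of
the plain infimum term, then the `f`-state-aware suboptimality upper bound is at most the
plain one. -/
theorem f_state_aware_key_condition {S A : Type*} [Fintype S] [Fintype A]
    [Nonempty S] [Nonempty A] [DecidableEq S]
    (f : ℝ → ℝ)
    (P PD : Matrix (S × A) S ℝ)
    (hP0 : ∀ p s, 0 ≤ P p s) (hP1 : ∀ p, ∑ s, P p s = 1)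
    (hPD0 : ∀ p s, 0 ≤ PD p s) (hPD1 : ∀ p, ∑ s, PD p s = 1)
    (r : S × A → ℝ) (γ : ℝ) (hγ0 : 0 ≤ γ) (hγ1 : γ < 1)
    (ρ : S → ℝ) (hρ0 : ∀ s, 0 ≤ ρ s) (hρ1 : ∑ s, ρ s = 1)
    (Pol : Finset (S → A → ℝ)) (hPolne : Pol.Nonempty)
    (hPol : ∀ π ∈ Pol, (∀ s a, 0 ≤ π s a) ∧ (∀ s, ∑ a, π s a = 1))
    (πstar : S → A → ℝ) (hπstar0 : ∀ s a, 0 ≤ πstar s a) (hπstar1 : ∀ s, ∑ a, πstar s a = 1)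
    (α : ℝ) (hα : 0 < α)
    (dDat : S → ℝ) (hdDat : ∀ s, 0 < dDat s)
    (Dis u : (S → A → ℝ) → S → ℝ)
    (hDis : ∀ π ∈ Pol, ∀ s, 0 ≤ Dis π s)
    (π₁ : S → A → ℝ) (hπ₁ : π₁ ∈ Pol)
    (hπ₁max : ∀ π ∈ Pol,
      ∑ s, noccVec γ PD ρ π s * (u π s - α * (f (noccVec γ PD ρ π s / dDat s) * Dis π s))
        ≤ ∑ s, noccVec γ PD ρ π₁ s
            * (u π₁ s - α * (f (noccVec γ PD ρ π₁ s / dDat s) * Dis π₁ s)))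
    (π₂ : S → A → ℝ) (hπ₂ : π₂ ∈ Pol)
    (hπ₂min : ∀ π ∈ Pol,
      ∑ s, ρ s * (valVec γ P r πstar s - valVec γ P r π₂ s)
          + ∑ s, noccVec γ PD ρ π₂ s * (u π₂ s + α * Dis π₂ s)
        ≤ ∑ s, ρ s * (valVec γ P r πstar s - valVec γ P r π s)
          + ∑ s, noccVec γ PD ρ π s * (u π s + α * Dis π s))
    (hkey : ∑ s, noccVec γ PD ρ π₂ s * ((f (noccVec γ PD ρ π₂ s / dDat s) - 1) * Dis π₂ s)
        ≤ ∑ s, noccVec γ PD ρ π₁ s * ((f (noccVec γ PD ρ π₁ s / dDat s) - 1) * Dis π₁ s)) :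
    Pol.sup' hPolne (fun π =>
        ∑ s, noccVec γ PD ρ π s * (u π s - α * (f (noccVec γ PD ρ π s / dDat s) * Dis π s)))
      + Pol.inf' hPolne (fun π =>
          ∑ s, ρ s * (valVec γ P r πstar s - valVec γ P r π s)
            + ∑ s, noccVec γ PD ρ π s
                * (u π s + α * (f (noccVec γ PD ρ π s / dDat s) * Dis π s)))
    ≤ Pol.sup' hPolne (fun π => ∑ s, noccVec γ PD ρ π s * (u π s - α * Dis π s))
      + Pol.inf' hPolne (fun π =>
          ∑ s, ρ s * (valVec γ P r πstar s - valVec γ P r π s)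
            + ∑ s, noccVec γ PD ρ π s * (u π s + α * Dis π s)) := by
  have h1 := Finset.sup'_le hPolne
    (fun π => ∑ s, noccVec γ PD ρ π s
      * (u π s - α * (f (noccVec γ PD ρ π s / dDat s) * Dis π s))) hπ₁max
  have h2 := Finset.inf'_le
    (fun π => ∑ s, ρ s * (valVec γ P r πstar s - valVec γ P r π s)
      + ∑ s, noccVec γ PD ρ π s
          * (u π s + α * (f (noccVec γ PD ρ π s / dDat s) * Dis π s))) hπ₂
  have h3 := Finset.le_sup' (fun π => ∑ s, noccVec γ PD ρ π s * (u π s - α * Dis π s)) hπ₁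
  have h4 := Finset.le_inf' hPolne
    (fun π => ∑ s, ρ s * (valVec γ P r πstar s - valVec γ P r π s)
      + ∑ s, noccVec γ PD ρ π s * (u π s + α * Dis π s)) hπ₂min
  -- sum identities
  have e1 : ∑ s, noccVec γ PD ρ π₁ s
        * (u π₁ s - α * (f (noccVec γ PD ρ π₁ s / dDat s) * Dis π₁ s))
      = ∑ s, noccVec γ PD ρ π₁ s * (u π₁ s - α * Dis π₁ s)
        - α * ∑ s, noccVec γ PD ρ π₁ s
            * ((f (noccVec γ PD ρ π₁ s / dDat s) - 1) * Dis π₁ s) := by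
    rw [Finset.mul_sum, ← Finset.sum_sub_distrib]
    exact Finset.sum_congr rfl fun s _ => by ring
  have e2 : ∑ s, noccVec γ PD ρ π₂ s
        * (u π₂ s + α * (f (noccVec γ PD ρ π₂ s / dDat s) * Dis π₂ s))
      = ∑ s, noccVec γ PD ρ π₂ s * (u π₂ s + α * Dis π₂ s)
        + α * ∑ s, noccVec γ PD ρ π₂ s
            * ((f (noccVec γ PD ρ π₂ s / dDat s) - 1) * Dis π₂ s) := by
    rw [Finset.mul_sum, ← Finset.sum_add_distrib]
    exact Finset.sum_congr rfl fun s _ => by ring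
  have hk : α * ∑ s, noccVec γ PD ρ π₂ s
        * ((f (noccVec γ PD ρ π₂ s / dDat s) - 1) * Dis π₂ s)
      ≤ α * ∑ s, noccVec γ PD ρ π₁ s
        * ((f (noccVec γ PD ρ π₁ s / dDat s) - 1) * Dis π₁ s) :=
    mul_le_mul_of_nonneg_left hkey hα.le
  have h2' := h2.trans_eq (by rw [e2])
  linarith [h1.trans_eq e1]
end

section
/- (Final chain in the proof of Theorem 2.) Let S be a nonempty finite type, d : S → ℝ nonnegative with ∑_s d(s) = 1, d^D : S → ℝ with d^D(s) > 0 for all s, w(s) := d(s)/d^D(s), and Dis : S → ℝ with 0 ≤ Dis(s) ≤ Δ_β for all s, where Δ_β > 0. Suppose s₁ ∈ S and κ ∈ (0,1] satisfy d(s₁) ≥ κ and κ ≥ d^D(s₁). Then ∑_s d(s)·(w(s) − 1)·Dis(s) ≥ κ·(κ/d^D(s₁) − 1)·Dis(s₁) − Δ_β. -/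
/-- final chain in the proof of Theorem 2. For a normalized occupancy `d`,
a positive empirical state distribution `dDat` with ratio `w = d/dDat`, and a nonnegative
divergence `Dis` bounded by `Δβ`, if `d(s₁) ≥ κ ≥ dDat(s₁)` with `κ ∈ (0,1]`, then
`∑ₛ d(s)·(w(s) − 1)·Dis(s) ≥ κ·(κ/dDat(s₁) − 1)·Dis(s₁) − Δβ`. -/
theorem state_aware_correction_lower_bound {S : Type*} [Fintype S] [Nonempty S]
    (d dDat : S → ℝ) (hd0 : ∀ s, 0 ≤ d s) (hd1 : ∑ s, d s = 1)
    (hdDat : ∀ s, 0 < dDat s)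
    (Dis : S → ℝ) (Δβ : ℝ) (hΔβ : 0 < Δβ)
    (hDis : ∀ s, 0 ≤ Dis s ∧ Dis s ≤ Δβ)
    (s₁ : S) (κ : ℝ) (hκ0 : 0 < κ) (hκ1 : κ ≤ 1)
    (hds₁ : κ ≤ d s₁) (hκd : dDat s₁ ≤ κ) :
    κ * (κ / dDat s₁ - 1) * Dis s₁ - Δβ ≤ ∑ s, d s * ((d s / dDat s - 1) * Dis s) := by
  classical
  have hsplit := (Finset.add_sum_erase Finset.univ
    (fun s => d s * ((d s / dDat s - 1) * Dis s)) (Finset.mem_univ s₁)).symm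
  rw [hsplit]
  have h1 : κ * (κ / dDat s₁ - 1) * Dis s₁ ≤ d s₁ * ((d s₁ / dDat s₁ - 1) * Dis s₁) := by
    have ha := hdDat s₁
    have hDis1 := (hDis s₁).1
    rw [← mul_assoc]
    apply mul_le_mul_of_nonneg_right _ hDis1
    rw [div_sub_one (ne_of_gt ha), div_sub_one (ne_of_gt ha),
      ← mul_div_assoc, ← mul_div_assoc, div_le_div_iff₀ ha ha]
    nlinarith [mul_nonneg (mul_nonneg ha.le (sub_nonneg.2 hds₁)) (show (0:ℝ) ≤ d s₁ + κ - dDat s₁ by linarith)]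
  have h2 : -Δβ ≤ ∑ s ∈ Finset.univ.erase s₁, d s * ((d s / dDat s - 1) * Dis s) := by
    have hterm : ∀ s ∈ Finset.univ.erase s₁, -(d s * Δβ) ≤ d s * ((d s / dDat s - 1) * Dis s) := by
      intro s _
      have hw : (0:ℝ) ≤ d s / dDat s := div_nonneg (hd0 s) (hdDat s).le
      have : -Δβ ≤ (d s / dDat s - 1) * Dis s := by
        nlinarith [(hDis s).1, (hDis s).2]
      nlinarith [hd0 s]
    calc -Δβ ≤ ∑ s ∈ Finset.univ.erase s₁, -(d s * Δβ) := by
          rw [Finset.sum_neg_distrib, ← Finset.sum_mul]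
          have : ∑ s ∈ Finset.univ.erase s₁, d s ≤ 1 := by
            rw [← hd1]
            exact Finset.sum_le_sum_of_subset_of_nonneg (Finset.erase_subset _ _)
              (fun s _ _ => hd0 s)
          nlinarith
      _ ≤ _ := Finset.sum_le_sum hterm
  linarith
end
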